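/- Let A = diag(B_1,…,B_s) be a block Jordan matrix in Ω_n whose first block B_1 has size m_1 and eigenvalue λ_1. Let φ : D → G_n be holomorphic and satisfy the conditions (★) at 0 relative to A. Let φ_{1,1},…,φ_{m_1,m_1} : D → ℂ be holomorphic functions with φ_{i,i}(0) = λ_1 for 1 ≤ i ≤ m_1. Then for every 0 ≤ k ≤ m_1 − 1, the function ζ ↦ Δ^k P_{[φ(ζ)]}(φ_{1,1}(ζ),…,φ_{k+1,k+1}(ζ)) satisfies Δ^k P_{[φ(ζ)]}(φ_{1,1}(ζ),…,φ_{k+1,k+1}(ζ)) = O(ζ^{d_{m_1−k}(B_1)}) at 0. -/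

import Mathlib

open Polynomial

noncomputable section

/-- The open unit disc in `ℂ`. -/
def unitDisc : Set ℂ := Metric.ball 0 1

/-- `g(ζ) = O((ζ-α)^d)` at `α`: for a function holomorphic near `α`, vanishing
to order at least `d`, i.e. all derivatives of order `< d` vanish at `α`. -/
def VanishesToOrder (g : ℂ → ℂ) (α : ℂ) (d : ℕ) : Prop :=
  ∀ i < d, iteratedDeriv i g α = 0

/-- The map `π : M_n(ℂ) → ℂ^n`, `π(A) = (σ_1(A), …, σ_n(A))`, where
`det(tI - A) = ∑_{j=0}^n (-1)^j σ_j(A) t^{n-j}`.  Index `i : Fin n` stands for `j = i+1`. -/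
def piCoef (n : ℕ) (A : Matrix (Fin n) (Fin n) ℂ) : Fin n → ℂ :=
  fun i => (-1 : ℂ) ^ ((i : ℕ) + 1) * (Matrix.charpoly A).coeff (n - ((i : ℕ) + 1))

/-- The spectral ball `Ω_n`: matrices whose eigenvalues (roots of the characteristic
polynomial) all have modulus `< 1`. -/
def SpectralBall (n : ℕ) : Set (Matrix (Fin n) (Fin n) ℂ) :=
  { A | ∀ z ∈ (Matrix.charpoly A).roots, ‖z‖ < 1 }

/-- The symmetrized polydisc `G_n = π(Ω_n)`. -/
def SymPolydisc (n : ℕ) : Set (Fin n → ℂ) := piCoef n '' SpectralBall n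

/-- `P_{[v]}(t) = t^n + ∑_{j=1}^n (-1)^j v_j t^{n-j}`. -/
def Pv (n : ℕ) (v : Fin n → ℂ) : Polynomial ℂ :=
  X ^ n + ∑ i : Fin n, C ((-1 : ℂ) ^ ((i : ℕ) + 1) * v i) * X ^ (n - ((i : ℕ) + 1))

/-- `k`-th derivative of a polynomial with respect to the indeterminate. -/
def polyDeriv (k : ℕ) (P : Polynomial ℂ) : Polynomial ℂ :=
  (fun Q : Polynomial ℂ => Polynomial.derivative Q)^[k] P

/-- A matrix is cyclic (non-derogatory) if some vector has iterates spanning `ℂ^n`. -/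
def IsCyclicMatrix {n : ℕ} (M : Matrix (Fin n) (Fin n) ℂ) : Prop :=
  ∃ v : Fin n → ℂ, Submodule.span ℂ { w : Fin n → ℂ | ∃ k : ℕ, w = (M ^ k).mulVec v } = ⊤

open scoped Classical in
/-- `d_i(B) = 1 + #{ j : m-i+2 ≤ j ≤ m, B_{j-1,j} = 0 }` (1-indexed entries). -/
def dIdx {m : ℕ} (B : Matrix (Fin m) (Fin m) ℂ) (i : ℕ) : ℕ :=
  1 + ((Finset.Icc (m - i + 2) m).filter
      (fun j => ∀ (h1 : j - 2 < m) (h2 : j - 1 < m), B ⟨j - 2, h1⟩ ⟨j - 1, h2⟩ = 0)).card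

open scoped Classical in
/-- A single-eigenvalue Jordan matrix with eigenvalue `lam`: diagonal entries `lam`,
superdiagonal entries `0` or `1`, all other entries `0`, and the sizes of the consecutive
Jordan blocks (delimited by the vanishing superdiagonal entries) nondecreasing.
The list `L` records the consecutive Jordan block sizes; the superdiagonal entry in
(0-indexed) column `j` vanishes exactly when `j` is a proper partial sum of `L`. -/
def IsSingleJordan {m : ℕ} (B : Matrix (Fin m) (Fin m) ℂ) (lam : ℂ) : Prop :=
  (∀ i, B i i = lam) ∧
  (∀ i j : Fin m, (j : ℕ) ≠ (i : ℕ) → (j : ℕ) ≠ (i : ℕ) + 1 → B i j = 0) ∧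
  ∃ L : List ℕ, (∀ x ∈ L, 0 < x) ∧ L.sum = m ∧ L.Pairwise (· ≤ ·) ∧
    ∀ i j : Fin m, (j : ℕ) = (i : ℕ) + 1 →
      B i j = if (∃ t, 0 < t ∧ t < L.length ∧ (L.take t).sum = (j : ℕ)) then 0 else 1

/-- Partial sums `n_t = m_1 + ⋯ + m_t` of block sizes. -/
def nsum {s : ℕ} (m : Fin s → ℕ) (t : ℕ) : ℕ :=
  ∑ j ∈ Finset.univ.filter (fun j : Fin s => (j : ℕ) < t), m j

/-- `A = diag(B_1, …, B_s)` is a block Jordan matrix with single-eigenvalue Jordan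
blocks `B j` of size `m j` and pairwise distinct eigenvalues `lam j`. -/
def IsBlockJordan {n s : ℕ} (m : Fin s → ℕ) (lam : Fin s → ℂ)
    (B : ∀ j : Fin s, Matrix (Fin (m j)) (Fin (m j)) ℂ)
    (A : Matrix (Fin n) (Fin n) ℂ) : Prop :=
  (∑ j, m j) = n ∧ Function.Injective lam ∧ (∀ j, 0 < m j) ∧
  (∀ j, IsSingleJordan (B j) (lam j)) ∧
  (∀ (j : Fin s) (a b : Fin (m j)) (h1 : nsum m (j : ℕ) + (a : ℕ) < n)
      (h2 : nsum m (j : ℕ) + (b : ℕ) < n),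
      A ⟨nsum m (j : ℕ) + (a : ℕ), h1⟩ ⟨nsum m (j : ℕ) + (b : ℕ), h2⟩ = B j a b) ∧
  (∀ (i k : Fin n) (j j' : Fin s), j ≠ j' →
      nsum m (j : ℕ) ≤ (i : ℕ) → (i : ℕ) < nsum m ((j : ℕ) + 1) →
      nsum m (j' : ℕ) ≤ (k : ℕ) → (k : ℕ) < nsum m ((j' : ℕ) + 1) →
      A i k = 0)

/-- The conditions (★) at `α` relative to a block Jordan matrix with data `m, lam, B`:
`(d^k P_{[φ(ζ)]}/dt^k)(λ_j) = O((ζ-α)^{d_{m_j-k}(B_j)})` for `1 ≤ j ≤ s`, `0 ≤ k ≤ m_j - 1`. -/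
def StarConditions {n s : ℕ} (m : Fin s → ℕ) (lam : Fin s → ℂ)
    (B : ∀ j : Fin s, Matrix (Fin (m j)) (Fin (m j)) ℂ)
    (φ : ℂ → Fin n → ℂ) (α : ℂ) : Prop :=
  ∀ (j : Fin s), ∀ k < m j,
    VanishesToOrder (fun ζ => (polyDeriv k (Pv n (φ ζ))).eval (lam j)) α
      (dIdx (B j) (m j - k))

/-- Sum of all monomials of degree `d` in `k` variables (complete homogeneous symmetric sum). -/
def homogSum (k d : ℕ) (x : Fin k → ℂ) : ℂ :=
  ∑ c ∈ Finset.Nat.antidiagonalTuple k d, ∏ i, x i ^ c i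

/-- Divided difference `Δ^k P (x_1, …, x_{k+1}) = ∑_{j≥k} a_j ∑_{i_1+⋯+i_{k+1}=j-k} x^i`. -/
def divDiff (P : Polynomial ℂ) (k : ℕ) (x : Fin (k + 1) → ℂ) : ℂ :=
  ∑ j ∈ Finset.Icc k P.natDegree, P.coeff j * homogSum (k + 1) (j - k) x

/-- The Lempert function of the spectral ball. -/
def lempertOmega (n : ℕ) (A B : Matrix (Fin n) (Fin n) ℂ) : ℝ :=
  sInf { r : ℝ | ∃ α ∈ unitDisc, r = ‖α‖ ∧
    ∃ Φ : ℂ → Matrix (Fin n) (Fin n) ℂ,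
      (∀ i j, DifferentiableOn ℂ (fun ζ => Φ ζ i j) unitDisc) ∧
      Set.MapsTo Φ unitDisc (SpectralBall n) ∧ Φ α = A ∧ Φ 0 = B }

/-- The matrix `B_k^λ(ζ)`. -/
def Bmat (k : ℕ) (lam ζ : ℂ) : Matrix (Fin k) (Fin k) ℂ :=
  Matrix.of fun i j =>
    if (j : ℕ) = (i : ℕ) then lam
    else if (j : ℕ) = (i : ℕ) + 1 then (if (i : ℕ) = k - 2 then 1 else ζ)
    else if (i : ℕ) = k - 1 ∧ (j : ℕ) = 0 then ζ
    else 0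

/-- The block diagonal matrix `diag(B_k^{λ_1}(ζ), B_l^{λ_2}(ζ))` as an `(k+l)×(k+l)` matrix. -/
def BmatPair (k l : ℕ) (lam1 lam2 ζ : ℂ) : Matrix (Fin (k + l)) (Fin (k + l)) ℂ :=
  Matrix.reindex finSumFinEquiv finSumFinEquiv
    (Matrix.fromBlocks (Bmat k lam1 ζ) 0 0 (Bmat l lam2 ζ))

end

/-!
Expanding `P` in powers of `t - λ` (Taylor's formula) and using that divided differences commute
with translation, `Δ^k P(x) = ∑_r P^{(k+r)}(λ) / (k+r)! · h_r(x - λ)`, where `h_r` is the complete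
homogeneous symmetric polynomial of degree `r`; translation invariance comes from the recursion
`Δ^k[(t - λ) Q](x₀, …, x_k) = (x₀ - λ) Δ^k Q(x₀, …, x_k) + Δ^{k-1} Q(x₁, …, x_k)`.
If all nodes tend to `λ = λ₁`, then `h_r(x(ζ) - λ)` vanishes to order `r` by homogeneity, and by
(★) the coefficient vanishes to order `d_{m₁-k-r}(B₁) ≥ d_{m₁-k}(B₁) - r`, since `i ↦ d_i(B₁)`
grows by at most one per step. Once `k + r ≥ m₁` the factor `h_r` alone suffices, because
`d_{m₁-k}(B₁) ≤ m₁ - k`.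
-/

open Finset Polynomial Filter Topology

theorem homogSum_succ (k d : ℕ) (x : Fin (k + 1) → ℂ) :
    homogSum (k + 1) d x =
      ∑ p ∈ antidiagonal d, x 0 ^ p.1 * homogSum k p.2 (Fin.tail x) := by
  simp only [homogSum, Finset.sum, Finset.Nat.antidiagonalTuple, Multiset.Nat.antidiagonalTuple,
    Multiset.map_coe, Multiset.sum_coe, List.Nat.antidiagonalTuple]
  rw [show (antidiagonal d).val = (List.Nat.antidiagonal d : Multiset (ℕ × ℕ)) from rfl,
    Multiset.map_coe, Multiset.sum_coe, List.map_flatMap, List.flatMap_def, List.sum_flatten,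
    List.map_map]
  congr 1
  refine List.map_congr_left fun p _ => ?_
  rw [Function.comp_apply, List.map_map, ← List.sum_map_mul_left]
  congr 1
  refine List.map_congr_left fun e _ => ?_
  simp [Fin.prod_univ_succ, Fin.tail]

theorem homogSum_succ_succ (k d : ℕ) (x : Fin (k + 1) → ℂ) :
    homogSum (k + 1) (d + 1) x = x 0 * homogSum (k + 1) d x + homogSum k (d + 1) (Fin.tail x) := by
  rw [homogSum_succ, homogSum_succ, Nat.sum_antidiagonal_succ, mul_sum, add_comm]
  simp [pow_succ, mul_assoc, mul_left_comm]

theorem homogSum_zero_right (k : ℕ) (x : Fin k → ℂ) : homogSum k 0 x = 1 := by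
  simp [homogSum, Finset.Nat.antidiagonalTuple_zero_right]

theorem homogSum_one_left (d : ℕ) (x : Fin 1 → ℂ) : homogSum 1 d x = x 0 ^ d := by
  simp [homogSum]

theorem homogSum_smul (k d : ℕ) (c : ℂ) (x : Fin k → ℂ) :
    homogSum k d (c • x) = c ^ d * homogSum k d x := by
  rw [homogSum, homogSum, mul_sum]
  refine sum_congr rfl fun e he => ?_
  rw [Finset.Nat.mem_antidiagonalTuple] at he
  simp only [Pi.smul_apply, smul_eq_mul, mul_pow, prod_mul_distrib, prod_pow_eq_pow_sum, he]

def divDiffMonomial (k : ℕ) (x : Fin (k + 1) → ℂ) (j : ℕ) : ℂ :=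
  if k ≤ j then homogSum (k + 1) (j - k) x else 0

theorem divDiffMonomial_add (k r : ℕ) (x : Fin (k + 1) → ℂ) :
    divDiffMonomial k x (k + r) = homogSum (k + 1) r x := by
  simp [divDiffMonomial]

theorem divDiffMonomial_zero_left (x : Fin 1 → ℂ) (j : ℕ) : divDiffMonomial 0 x j = x 0 ^ j := by
  simp [divDiffMonomial, homogSum_one_left]

theorem divDiffMonomial_succ_succ (k j : ℕ) (x : Fin (k + 2) → ℂ) :
    divDiffMonomial (k + 1) x (j + 1) =
      x 0 * divDiffMonomial (k + 1) x j + divDiffMonomial k (Fin.tail x) j := by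
  rcases lt_trichotomy j k with h | rfl | h
  · simp [divDiffMonomial, h.not_ge, show ¬ k + 1 ≤ j by omega]
  · simp [divDiffMonomial, homogSum_zero_right]
  · obtain ⟨e, rfl⟩ := Nat.exists_eq_add_of_lt h
    simp only [divDiffMonomial, show k + 1 ≤ k + e + 1 + 1 by omega,
      show k + 1 ≤ k + e + 1 by omega, show k ≤ k + e + 1 by omega, if_true, show k + e + 1 + 1 - (k + 1) = e + 1 by omega,
      show k + e + 1 - (k + 1) = e by omega, show k + e + 1 - k = e + 1 by omega]
    exact homogSum_succ_succ (k + 1) e x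

theorem divDiff_eq_sum_range {P : ℂ[X]} {N : ℕ} (hN : P.natDegree < N) (k : ℕ)
    (x : Fin (k + 1) → ℂ) :
    divDiff P k x = ∑ j ∈ range N, P.coeff j * divDiffMonomial k x j := by
  simp only [divDiff, divDiffMonomial, mul_ite, mul_zero]
  rw [← sum_filter]
  refine sum_subset (fun j hj => ?_) fun j hj hj' => ?_
  · simp only [mem_Icc, mem_filter, mem_range] at hj ⊢
    omega
  · simp only [mem_Icc, mem_filter, mem_range, not_and, not_le] at hj hj'
    rw [coeff_eq_zero_of_natDegree_lt (hj' hj.2), zero_mul]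

def divDiffₗ (k : ℕ) (x : Fin (k + 1) → ℂ) : ℂ[X] →ₗ[ℂ] ℂ where
  toFun P := divDiff P k x
  map_add' P Q := by
    have hP : P.natDegree < P.natDegree + Q.natDegree + 1 := by omega
    have hQ : Q.natDegree < P.natDegree + Q.natDegree + 1 := by omega
    have hPQ := (natDegree_add_le P Q).trans_lt (max_lt hP hQ)
    simp only [divDiff_eq_sum_range hP, divDiff_eq_sum_range hQ, divDiff_eq_sum_range hPQ,
      coeff_add, add_mul, sum_add_distrib]
  map_smul' c P := by
    have hcP := (natDegree_smul_le c P).trans_lt P.natDegree.lt_succ_self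
    simp only [divDiff_eq_sum_range hcP, divDiff_eq_sum_range P.natDegree.lt_succ_self,
      coeff_smul, smul_eq_mul, mul_sum, mul_assoc, RingHom.id_apply]

theorem divDiffₗ_apply (k : ℕ) (x : Fin (k + 1) → ℂ) (P : ℂ[X]) :
    divDiffₗ k x P = divDiff P k x := rfl

theorem divDiff_zero_eq_eval (P : ℂ[X]) (x : Fin 1 → ℂ) : divDiff P 0 x = P.eval (x 0) := by
  rw [divDiff_eq_sum_range P.natDegree.lt_succ_self, eval_eq_sum_range]
  simp only [divDiffMonomial_zero_left]

theorem divDiff_X_mul (Q : ℂ[X]) (k : ℕ) (x : Fin (k + 2) → ℂ) :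
    divDiff (X * Q) (k + 1) x = x 0 * divDiff Q (k + 1) x + divDiff Q k (Fin.tail x) := by
  have hQ := Q.natDegree.lt_succ_self
  have hXQ : (X * Q).natDegree < Q.natDegree + 1 + 1 := by
    have := natDegree_mul_le (p := (X : ℂ[X])) (q := Q)
    rw [natDegree_X] at this
    omega
  rw [divDiff_eq_sum_range hXQ, divDiff_eq_sum_range hQ, divDiff_eq_sum_range hQ, sum_range_succ',
    mul_sum, ← sum_add_distrib]
  simp only [coeff_X_mul, coeff_X_mul_zero, zero_mul, add_zero, divDiffMonomial_succ_succ]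
  refine sum_congr rfl fun j _ => by ring

theorem divDiff_X_sub_C_pow (lam : ℂ) (i k : ℕ) (x : Fin (k + 1) → ℂ) :
    divDiff ((X - C lam) ^ i) k x = divDiffMonomial k (fun t => x t - lam) i := by
  induction i generalizing k with
  | zero =>
    rw [pow_zero, divDiff_eq_sum_range (N := 1) (by simp)]
    simp [divDiffMonomial, homogSum_zero_right]
  | succ i ih =>
    cases k with
    | zero => simp [divDiff_zero_eq_eval, divDiffMonomial_zero_left]
    | succ k =>
      rw [pow_succ', sub_mul, ← divDiffₗ_apply, map_sub, C_mul', map_smul, divDiffₗ_apply,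
        divDiffₗ_apply, divDiff_X_mul, ih, ih, divDiffMonomial_succ_succ, smul_eq_mul]
      change _ = _ + divDiffMonomial k (fun t => Fin.tail x t - lam) i
      ring

theorem divDiff_eq_sum_taylor {P : ℂ[X]} {N : ℕ} (hN : P.natDegree < N) (lam : ℂ) (k : ℕ)
    (x : Fin (k + 1) → ℂ) :
    divDiff P k x =
      ∑ i ∈ range N, (taylor lam P).coeff i * divDiffMonomial k (fun t => x t - lam) i := by
  conv_lhs => rw [← sum_taylor_eq P lam,
    sum_over_range' _ (fun _ => by simp) N (by rwa [natDegree_taylor])]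
  simp only [C_mul', ← divDiffₗ_apply, map_sum, map_smul, smul_eq_mul]
  simp only [divDiffₗ_apply, divDiff_X_sub_C_pow]

theorem le_analyticOrderAt_sum {ι 𝕜 E : Type*} [NontriviallyNormedField 𝕜] [NormedAddCommGroup E]
    [NormedSpace 𝕜 E] (s : Finset ι) {f : ι → 𝕜 → E} {z₀ : 𝕜} {d : ℕ∞}
    (h : ∀ i ∈ s, d ≤ analyticOrderAt (f i) z₀) :
    d ≤ analyticOrderAt (fun z => ∑ i ∈ s, f i z) z₀ := by
  classical
  induction s using Finset.induction_on with
  | empty => simp [analyticOrderAt_eq_top.mpr (Eventually.of_forall fun _ => rfl)]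
  | insert a s ha ih =>
    simp only [sum_insert ha]
    exact (le_min (h a (mem_insert_self a s)) (ih fun i hi => h i (mem_insert_of_mem hi))).trans
      le_analyticOrderAt_add

theorem analyticAt_linearMap_apply_of_coeff {𝕜 E : Type*} [NontriviallyNormedField 𝕜]
    [NormedAddCommGroup E] [NormedSpace 𝕜 E] (L : 𝕜[X] →ₗ[𝕜] E) {P : 𝕜 → 𝕜[X]} {N : ℕ}
    {z₀ : 𝕜} (hdeg : ∀ z, (P z).natDegree < N)
    (hcoeff : ∀ j, AnalyticAt 𝕜 (fun z => (P z).coeff j) z₀) :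
    AnalyticAt 𝕜 (fun z => L (P z)) z₀ := by
  have hL : (fun z => L (P z)) = fun z => ∑ j ∈ range N, (P z).coeff j • L (X ^ j) := by
    funext z
    conv_lhs => rw [as_sum_range_C_mul_X_pow' (P z) (hdeg z)]
    simp only [C_mul', map_sum, map_smul]
  rw [hL]
  exact Finset.analyticAt_fun_sum _ fun j _ => (hcoeff j).smul analyticAt_const

theorem analyticAt_homogSum {k d : ℕ} {y : ℂ → Fin k → ℂ} {z₀ : ℂ}
    (hy : ∀ t, AnalyticAt ℂ (fun z => y z t) z₀) :
    AnalyticAt ℂ (fun z => homogSum k d (y z)) z₀ := by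
  unfold homogSum
  fun_prop

theorem natCast_le_analyticOrderAt_homogSum {k d : ℕ} {y : ℂ → Fin k → ℂ} {z₀ : ℂ}
    (hy : ∀ t, AnalyticAt ℂ (fun z => y z t) z₀) (hy₀ : ∀ t, y z₀ t = 0) :
    (d : ℕ∞) ≤ analyticOrderAt (fun z => homogSum k d (y z)) z₀ := by
  have hfactor (t : Fin k) : ∃ u : ℂ → ℂ, AnalyticAt ℂ u z₀ ∧
      ∀ᶠ z in 𝓝 z₀, y z t = (z - z₀) ^ 1 • u z :=
    (natCast_le_analyticOrderAt (hy t)).mp (by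
      simpa [Order.one_le_iff_ne_zero] using (hy t).analyticOrderAt_ne_zero.mpr (hy₀ t))
  choose u hu hyu using hfactor
  refine (natCast_le_analyticOrderAt (analyticAt_homogSum hy)).mpr
    ⟨fun z => homogSum k d (fun t => u t z), analyticAt_homogSum hu, ?_⟩
  filter_upwards [eventually_all.mpr hyu] with z hz
  rw [show y z = (z - z₀) • fun t => u t z from funext hz |>.trans (by ext; simp), homogSum_smul,
    smul_eq_mul]

theorem vanishesToOrder_iff_natCast_le_analyticOrderAt {g : ℂ → ℂ} {α : ℂ} {d : ℕ}
    (hg : AnalyticAt ℂ g α) :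
    VanishesToOrder g α d ↔ (d : ℕ∞) ≤ analyticOrderAt g α :=
  (natCast_le_analyticOrderAt_iff_iteratedDeriv_eq_zero hg).symm

theorem eval_polyDeriv (i : ℕ) (P : ℂ[X]) (lam : ℂ) :
    (polyDeriv i P).eval lam = i.factorial * (taylor lam P).coeff i := by
  rw [polyDeriv, ← factorial_smul_hasseDeriv, taylor_coeff, LinearMap.smul_apply, eval_smul,
    nsmul_eq_mul]

theorem natCast_le_analyticOrderAt_coeff_taylor {P : ℂ → ℂ[X]} {z₀ lam : ℂ} {i e : ℕ}
    (hc : AnalyticAt ℂ (fun z => (taylor lam (P z)).coeff i) z₀)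
    (h : VanishesToOrder (fun z => (polyDeriv i (P z)).eval lam) z₀ e) :
    (e : ℕ∞) ≤ analyticOrderAt (fun z => (taylor lam (P z)).coeff i) z₀ := by
  have hpd : (fun z => (polyDeriv i (P z)).eval lam) =
      (fun _ => (i.factorial : ℂ)) * fun z => (taylor lam (P z)).coeff i := by
    ext z
    simp [eval_polyDeriv]
  rwa [hpd, vanishesToOrder_iff_natCast_le_analyticOrderAt (analyticAt_const.mul hc),
    analyticOrderAt_mul analyticAt_const hc,
    analyticAt_const.analyticOrderAt_eq_zero.mpr (by simp [Nat.factorial_ne_zero]), zero_add] at h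

theorem vanishesToOrder_divDiff {P : ℂ → ℂ[X]} {n k d : ℕ} {x : ℂ → Fin (k + 1) → ℂ}
    {z₀ lam : ℂ} (hdeg : ∀ z, (P z).natDegree ≤ n)
    (hcoeff : ∀ j, AnalyticAt ℂ (fun z => (P z).coeff j) z₀)
    (hx : ∀ t, AnalyticAt ℂ (fun z => x z t) z₀) (hx₀ : ∀ t, x z₀ t = lam)
    (hP : ∀ r < d, VanishesToOrder (fun z => (polyDeriv (k + r) (P z)).eval lam) z₀ (d - r)) :
    VanishesToOrder (fun z => divDiff (P z) k (x z)) z₀ d := by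
  have hdeg' (z : ℂ) : (P z).natDegree < n + 1 := Nat.lt_succ_of_le (hdeg z)
  have htaylor (i : ℕ) : AnalyticAt ℂ (fun z => (taylor lam (P z)).coeff i) z₀ :=
    analyticAt_linearMap_apply_of_coeff ((lcoeff ℂ i).comp (taylor lam)) hdeg' hcoeff
  have hy (t : Fin (k + 1)) : AnalyticAt ℂ (fun z => x z t - lam) z₀ := (hx t).sub analyticAt_const
  have hmonomial (i : ℕ) :
      AnalyticAt ℂ (fun z => divDiffMonomial k (fun t => x z t - lam) i) z₀ := by
    unfold divDiffMonomial
    split_ifs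
    exacts [analyticAt_homogSum hy, analyticAt_const]
  have hterm (i : ℕ) : (d : ℕ∞) ≤ analyticOrderAt
      (fun z => (taylor lam (P z)).coeff i * divDiffMonomial k (fun t => x z t - lam) i) z₀ := by
    by_cases hki : k ≤ i
    swap
    · simp [divDiffMonomial, hki, analyticOrderAt_eq_top.mpr (Eventually.of_forall fun _ => rfl)]
    obtain ⟨r, rfl⟩ := Nat.exists_eq_add_of_le hki
    rw [show (fun z => (taylor lam (P z)).coeff (k + r) *
          divDiffMonomial k (fun t => x z t - lam) (k + r)) =
        (fun z => (taylor lam (P z)).coeff (k + r)) *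
          fun z => homogSum (k + 1) r (fun t => x z t - lam) by ext; simp [divDiffMonomial_add],
      analyticOrderAt_mul (htaylor _) (analyticAt_homogSum hy)]
    have hh : (r : ℕ∞) ≤ analyticOrderAt (fun z => homogSum (k + 1) r (fun t => x z t - lam)) z₀ :=
      natCast_le_analyticOrderAt_homogSum hy (by simp [hx₀])
    by_cases hr : r < d
    · calc (d : ℕ∞) = ((d - r : ℕ) : ℕ∞) + r := by rw [← Nat.cast_add, Nat.sub_add_cancel hr.le]
        _ ≤ _ := add_le_add (natCast_le_analyticOrderAt_coeff_taylor (htaylor _) (hP r hr)) hh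
    · exact (Nat.cast_le.mpr (not_lt.mp hr)).trans (hh.trans le_add_self)
  have hsum : (fun z => divDiff (P z) k (x z)) = fun z => ∑ i ∈ range (n + 1),
      (taylor lam (P z)).coeff i * divDiffMonomial k (fun t => x z t - lam) i :=
    funext fun z => divDiff_eq_sum_taylor (hdeg' z) lam k (x z)
  rw [hsum, vanishesToOrder_iff_natCast_le_analyticOrderAt
    (Finset.analyticAt_fun_sum _ fun i _ => (htaylor i).fun_mul (hmonomial i))]
  exact le_analyticOrderAt_sum _ fun i _ => hterm i

theorem VanishesToOrder.mono {g : ℂ → ℂ} {α : ℂ} {d e : ℕ} (h : VanishesToOrder g α d)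
    (hed : e ≤ d) : VanishesToOrder g α e :=
  fun i hi => h i (hi.trans_le hed)

theorem card_filter_Icc_le_card_filter_Icc_add (p : ℕ → Prop) [DecidablePred p] {a b : ℕ}
    (c : ℕ) : #{j ∈ Icc a c | p j} ≤ #{j ∈ Icc b c | p j} + (b - a) := by
  calc #{j ∈ Icc a c | p j} ≤ #({j ∈ Icc b c | p j} ∪ Ico a b) := by
        refine card_le_card fun j hj => ?_
        simp only [mem_filter, mem_Icc, mem_union, mem_Ico] at hj ⊢
        by_cases hbj : b ≤ j
        exacts [Or.inl ⟨⟨hbj, hj.1.2⟩, hj.2⟩, Or.inr ⟨hj.1.1, by omega⟩]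
    _ ≤ _ := by rw [← Nat.card_Ico a b]; exact card_union_le _ _

theorem dIdx_le_self {m : ℕ} (B : Matrix (Fin m) (Fin m) ℂ) {i : ℕ} (hi : 1 ≤ i) :
    dIdx B i ≤ i := by
  have := card_filter_le (Icc (m - i + 2) m)
    (fun j => ∀ (h1 : j - 2 < m) (h2 : j - 1 < m), B ⟨j - 2, h1⟩ ⟨j - 1, h2⟩ = 0)
  rw [Nat.card_Icc] at this
  unfold dIdx
  omega

theorem dIdx_le_dIdx_sub_add {m : ℕ} (B : Matrix (Fin m) (Fin m) ℂ) (i r : ℕ) :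
    dIdx B i ≤ dIdx B (i - r) + r := by
  have := card_filter_Icc_le_card_filter_Icc_add
    (fun j => ∀ (h1 : j - 2 < m) (h2 : j - 1 < m), B ⟨j - 2, h1⟩ ⟨j - 1, h2⟩ = 0)
    (a := m - i + 2) (b := m - (i - r) + 2) m
  unfold dIdx
  omega

theorem natDegree_Pv_le (n : ℕ) (v : Fin n → ℂ) : (Pv n v).natDegree ≤ n := by
  unfold Pv
  refine (natDegree_add_le _ _).trans (max_le (natDegree_X_pow_le n) ?_)
  refine natDegree_sum_le_of_forall_le _ _ fun i _ => (natDegree_C_mul_le _ _).trans ?_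
  exact (natDegree_X_pow_le _).trans (Nat.sub_le n _)

theorem analyticAt_coeff_Pv {n : ℕ} {φ : ℂ → Fin n → ℂ} {z₀ : ℂ}
    (hφ : ∀ i, AnalyticAt ℂ (fun z => φ z i) z₀) (j : ℕ) :
    AnalyticAt ℂ (fun z => (Pv n (φ z)).coeff j) z₀ := by
  simp only [Pv, coeff_add, finsetSum_coeff, coeff_C_mul, coeff_X_pow]
  fun_prop

theorem statement8_general (n s : ℕ) (hs : 0 < s) (m : Fin s → ℕ) (lam : Fin s → ℂ)
    (B : ∀ j : Fin s, Matrix (Fin (m j)) (Fin (m j)) ℂ)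
    (φ : ℂ → Fin n → ℂ) (hφ : DifferentiableOn ℂ φ unitDisc)
    (hstar : StarConditions m lam B φ 0)
    (φd : ℕ → ℂ → ℂ)
    (hφd : ∀ i, 1 ≤ i → i ≤ m ⟨0, hs⟩ →
      DifferentiableOn ℂ (φd i) unitDisc ∧ φd i 0 = lam ⟨0, hs⟩) :
    ∀ k < m ⟨0, hs⟩,
      VanishesToOrder
        (fun ζ => divDiff (Pv n (φ ζ)) k (fun t : Fin (k + 1) => φd ((t : ℕ) + 1) ζ)) 0
        (dIdx (B ⟨0, hs⟩) (m ⟨0, hs⟩ - k)) := by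
  intro k hk
  have hdisc : unitDisc ∈ 𝓝 (0 : ℂ) := Metric.isOpen_ball.mem_nhds (Metric.mem_ball_self one_pos)
  have hφd' (t : Fin (k + 1)) := hφd (t + 1) (by omega) (by omega)
  refine vanishesToOrder_divDiff (fun z => natDegree_Pv_le n (φ z))
    (analyticAt_coeff_Pv fun i => (differentiableOn_pi.mp hφ i).analyticAt hdisc)
    (fun t => (hφd' t).1.analyticAt hdisc) (fun t => (hφd' t).2) fun r hr => ?_
  have hkr : k + r < m ⟨0, hs⟩ := by
    have := dIdx_le_self (B ⟨0, hs⟩) (i := m ⟨0, hs⟩ - k) (by omega)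
    omega
  refine (hstar ⟨0, hs⟩ (k + r) hkr).mono ?_
  have := dIdx_le_dIdx_sub_add (B ⟨0, hs⟩) (m ⟨0, hs⟩ - k) r
  rw [Nat.sub_sub] at this
  omega

/-- Lemma 4.6(a): divided differences of `P_{[φ(ζ)]}` at holomorphic nodes
tending to `λ_1` inherit the vanishing orders `d_{m_1-k}(B_1)` from the conditions (★). -/
theorem statement8 (n s : ℕ) (hs : 0 < s) (m : Fin s → ℕ) (lam : Fin s → ℂ)
    (B : ∀ j : Fin s, Matrix (Fin (m j)) (Fin (m j)) ℂ)
    (A : Matrix (Fin n) (Fin n) ℂ) (hBJ : IsBlockJordan m lam B A)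
    (hAΩ : A ∈ SpectralBall n)
    (φ : ℂ → Fin n → ℂ) (hφ : DifferentiableOn ℂ φ unitDisc)
    (hφG : Set.MapsTo φ unitDisc (SymPolydisc n))
    (hstar : StarConditions m lam B φ 0)
    (φd : ℕ → ℂ → ℂ)
    (hφd : ∀ i, 1 ≤ i → i ≤ m ⟨0, hs⟩ →
      DifferentiableOn ℂ (φd i) unitDisc ∧ φd i 0 = lam ⟨0, hs⟩) :
    ∀ k < m ⟨0, hs⟩,
      VanishesToOrder
        (fun ζ => divDiff (Pv n (φ ζ)) k (fun t : Fin (k + 1) => φd ((t : ℕ) + 1) ζ)) 0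
        (dIdx (B ⟨0, hs⟩) (m ⟨0, hs⟩ - k)) :=
  statement8_general n s hs m lam B φ hφ hstar φd hφd
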